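/- Let $P \succ 0$ and $\bar P \succ 0$ be symmetric matrices with $Q_{\min} \preceq P, \bar P \preceq P_{\max}$ for positive definite $Q_{\min}, P_{\max}$, and suppose $\delta_\infty(P, \bar P) \le \gamma^k \log\left(\frac{\lambda_{\max}(P_{\max})}{\lambda_{\min}(Q_{\min})}\right)$ for some $\gamma \in (0,1)$ and integer $k \ge 0$. Then $\|P - \bar P\| \le \gamma^k\, \frac{\lambda_{\max}(P_{\max})^2}{\lambda_{\min}(Q_{\min})}$. -/

import Mathlib

open scoped Matrix.Norms.L2Operator Classical
open Matrix

noncomputable section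

/-- Loewner order: `A ⪯ B` iff `B - A` is positive semidefinite. -/
def Loewner {n : ℕ} (A B : Matrix (Fin n) (Fin n) ℝ) : Prop := (B - A).PosSemidef

/-- Matrix logarithm of a Hermitian matrix (junk value `0` otherwise). -/
def mlog {n : ℕ} (M : Matrix (Fin n) (Fin n) ℝ) : Matrix (Fin n) (Fin n) ℝ :=
  if h : M.IsHermitian then h.cfc Real.log else 0

/-- Inverse square root `M^{-1/2}` of a Hermitian (positive definite) matrix. -/
def minvSqrt {n : ℕ} (M : Matrix (Fin n) (Fin n) ℝ) : Matrix (Fin n) (Fin n) ℝ :=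
  if h : M.IsHermitian then h.cfc (fun x => (Real.sqrt x)⁻¹) else 0

/-- The invariant metric `δ∞(A,B) = ‖log (A^{-1/2} B A^{-1/2})‖` (spectral norm). -/
def deltaInf {n : ℕ} (A B : Matrix (Fin n) (Fin n) ℝ) : ℝ :=
  ‖mlog (minvSqrt A * B * minvSqrt A)‖

/-- Largest eigenvalue of a Hermitian matrix. -/
def lmax {n : ℕ} (M : Matrix (Fin n) (Fin n) ℝ) : ℝ :=
  if h : M.IsHermitian then ⨆ i, h.eigenvalues i else 0

/-- Smallest eigenvalue of a Hermitian matrix. -/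
def lmin {n : ℕ} (M : Matrix (Fin n) (Fin n) ℝ) : ℝ :=
  if h : M.IsHermitian then ⨅ i, h.eigenvalues i else 0

/-- The Riccati operator `F_{Q,R}(P)`. -/
def Ricc {n m : ℕ} (A : Matrix (Fin n) (Fin n) ℝ) (B : Matrix (Fin n) (Fin m) ℝ)
    (Q : Matrix (Fin n) (Fin n) ℝ) (R : Matrix (Fin m) (Fin m) ℝ)
    (P : Matrix (Fin n) (Fin n) ℝ) : Matrix (Fin n) (Fin n) ℝ :=
  Q + Aᵀ * P * A - Aᵀ * P * B * (R + Bᵀ * P * B)⁻¹ * Bᵀ * P * A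


/-! Put `R = P^{1/2}`, `S = P^{-1/2}` and `M = S P̄ S`. Then `P - P̄ = R (1 - M) R`, and the
C⋆-identity `‖R‖² = ‖P‖` gives `‖P - P̄‖ ≤ ‖P‖ ‖1 - M‖`. Every eigenvalue `μ > 0` of `M` satisfies
`|1 - μ| ≤ exp |log μ| - 1 ≤ exp δ∞(P, P̄) - 1`, and `‖P‖ ≤ λmax(Pmax)` since `P ⪯ Pmax`.
With `c = log (λmax(Pmax) / λmin(Qmin))`, convexity of `exp` gives
`exp (γ^k c) - 1 ≤ γ^k (exp c - 1)`, and `λmax(Pmax) (exp c - 1) ≤ λmax(Pmax)² / λmin(Qmin)`. -/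

open Real

namespace Real

theorem abs_one_sub_le_exp_abs_log_sub_one {x : ℝ} (hx : 0 < x) : |1 - x| ≤ exp |log x| - 1 := by
  rw [abs_sub_le_iff]
  constructor
  · linarith [log_le_sub_one_of_pos hx, neg_le_abs (log x), add_one_le_exp |log x|]
  · calc x - 1 = exp (log x) - 1 := by rw [exp_log hx]
      _ ≤ exp |log x| - 1 := by gcongr; exact le_abs_self _

theorem exp_mul_sub_one_le_mul {t : ℝ} (ht₀ : 0 ≤ t) (ht₁ : t ≤ 1) (c : ℝ) :
    exp (t * c) - 1 ≤ t * (exp c - 1) := by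
  have h := convexOn_exp.2 (Set.mem_univ 0) (Set.mem_univ c) (sub_nonneg.2 ht₁) ht₀ (by ring)
  simp only [smul_eq_mul, mul_zero, zero_add, exp_zero, mul_one] at h
  linarith

end Real

section CFC

variable {A : Type*} [NormedRing A] [StarRing A] [NormedAlgebra ℝ A]
  [IsometricContinuousFunctionalCalculus ℝ A IsSelfAdjoint]

theorem norm_one_sub_le_exp_norm_cfc_log_sub_one {a : A} (ha : IsSelfAdjoint a)
    (ha_pos : ∀ x ∈ spectrum ℝ a, 0 < x) : ‖1 - a‖ ≤ exp ‖cfc log a‖ - 1 := by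
  have hlog : ContinuousOn log (spectrum ℝ a) :=
    continuousOn_log.mono fun x hx => (ha_pos x hx).ne'
  have h_one_sub : 1 - a = cfc (fun x : ℝ => 1 - x) a := by
    rw [cfc_sub .., cfc_const_one ℝ a, cfc_id' ℝ a]
  rw [h_one_sub]
  refine norm_cfc_le (sub_nonneg.2 (one_le_exp (norm_nonneg _))) fun x hx => ?_
  calc ‖1 - x‖ = |1 - x| := norm_eq_abs _
    _ ≤ exp |log x| - 1 := abs_one_sub_le_exp_abs_log_sub_one (ha_pos x hx)
    _ ≤ exp ‖cfc log a‖ - 1 := by gcongr; exact norm_apply_le_norm_cfc log a hx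

end CFC

theorem CStarRing.norm_sub_le_norm_mul_norm_one_sub_conj {A : Type*} [NormedRing A] [StarRing A]
    [CStarRing A] {p q r s : A} (hr : IsSelfAdjoint r) (hrr : r * r = p) (hrs : r * s = 1)
    (hsr : s * r = 1) : ‖p - q‖ ≤ ‖p‖ * ‖1 - s * q * s‖ := by
  have hfactor : p - q = r * (1 - s * q * s) * r := by
    rw [← hrr, mul_sub, sub_mul, mul_one]
    simp only [← mul_assoc, hrs, one_mul]
    rw [mul_assoc _ s r, hsr, mul_one]
  have hnorm : ‖r‖ * ‖r‖ = ‖p‖ := by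
    rw [← CStarRing.norm_self_mul_star, hr.star_eq, hrr]
  calc ‖p - q‖ ≤ ‖r‖ * ‖1 - s * q * s‖ * ‖r‖ := by
        rw [hfactor]; exact (norm_mul_le _ _).trans (by gcongr; exact norm_mul_le _ _)
    _ = ‖p‖ * ‖1 - s * q * s‖ := by rw [← hnorm]; ring

namespace Matrix

open scoped MatrixOrder

variable {ι : Type*} {P : Matrix ι ι ℝ}

theorem PosDef.ne_zero [Nonempty ι] (hP : P.PosDef) : P ≠ 0 := fun h => by
  simpa [h] using hP.diag_pos (i := Classical.arbitrary ι)

variable [Fintype ι] [DecidableEq ι]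

theorem PosDef.cfc_sqrt_mul_cfc_inv_sqrt (hP : P.PosDef) :
    cfc sqrt P * cfc (fun x => (√x)⁻¹) P = 1 := by
  rw [← cfc_mul _ _ P (P.finite_real_spectrum.continuousOn _)
    (P.finite_real_spectrum.continuousOn _), ← cfc_one ℝ P]
  refine cfc_congr fun x hx => mul_inv_cancel₀ ?_
  exact (sqrt_pos.2 (hP.isStrictlyPositive.spectrum_pos hx)).ne'

theorem PosSemidef.cfc_sqrt_mul_self (hP : P.PosSemidef) : cfc sqrt P * cfc sqrt P = P := by
  conv_rhs => rw [← cfc_id' ℝ P]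
  rw [← cfc_mul _ _ P]
  refine cfc_congr fun x hx => mul_self_sqrt ?_
  exact spectrum_nonneg_of_nonneg hP.nonneg hx

theorem PosDef.conj_of_isHermitian_of_isUnit {S : Matrix ι ι ℝ} (hP : P.PosDef)
    (hS : S.IsHermitian) (hS_unit : IsUnit S) : (S * P * S).PosDef := by
  have := (IsUnit.posDef_star_left_conjugate_iff hS_unit).2 hP
  rwa [star_eq_conjTranspose, hS.eq] at this

end Matrix

open scoped MatrixOrder

section FinDim

variable {n : ℕ}

theorem minvSqrt_eq_cfc {P : Matrix (Fin n) (Fin n) ℝ} (hP : P.IsHermitian) :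
    minvSqrt P = cfc (fun x => (√x)⁻¹) P := by
  rw [minvSqrt, dif_pos hP, hP.cfc_eq]

theorem mlog_eq_cfc {M : Matrix (Fin n) (Fin n) ℝ} (hM : M.IsHermitian) :
    mlog M = cfc log M := by
  rw [mlog, dif_pos hM, hM.cfc_eq]

theorem norm_sub_le_norm_mul_exp_deltaInf_sub_one {P Pb : Matrix (Fin n) (Fin n) ℝ}
    (hP : P.PosDef) (hPb : Pb.PosDef) : ‖P - Pb‖ ≤ ‖P‖ * (exp (deltaInf P Pb) - 1) := by
  set S := minvSqrt P
  have hS : S = cfc (fun x => (√x)⁻¹) P := minvSqrt_eq_cfc hP.1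
  have hRS : cfc sqrt P * S = 1 := hS ▸ hP.cfc_sqrt_mul_cfc_inv_sqrt
  have hSR : S * cfc sqrt P = 1 := mul_eq_one_comm.1 hRS
  have hM : (S * Pb * S).PosDef :=
    hPb.conj_of_isHermitian_of_isUnit (hS ▸ cfc_predicate _ P) ⟨⟨S, _, hSR, hRS⟩, rfl⟩
  calc ‖P - Pb‖ ≤ ‖P‖ * ‖1 - S * Pb * S‖ :=
        CStarRing.norm_sub_le_norm_mul_norm_one_sub_conj (cfc_predicate _ P)
          hP.posSemidef.cfc_sqrt_mul_self hRS hSR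
    _ ≤ ‖P‖ * (exp (deltaInf P Pb) - 1) := by
        gcongr
        rw [deltaInf, mlog_eq_cfc hM.1]
        exact norm_one_sub_le_exp_norm_cfc_log_sub_one hM.1.isSelfAdjoint
          fun x hx => hM.isStrictlyPositive.spectrum_pos hx

theorem le_lmax_of_mem_spectrum {A : Matrix (Fin n) (Fin n) ℝ} (hA : A.IsHermitian) {x : ℝ}
    (hx : x ∈ spectrum ℝ A) : x ≤ lmax A := by
  rw [hA.spectrum_real_eq_range_eigenvalues] at hx
  obtain ⟨i, rfl⟩ := hx
  rw [lmax, dif_pos hA]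
  exact le_ciSup (Set.finite_range _).bddAbove i

theorem lmax_nonneg {A : Matrix (Fin n) (Fin n) ℝ} (hA : A.PosSemidef) : 0 ≤ lmax A := by
  rw [lmax, dif_pos hA.1]
  exact Real.iSup_nonneg hA.eigenvalues_nonneg

theorem lmin_nonneg {A : Matrix (Fin n) (Fin n) ℝ} (hA : A.PosSemidef) : 0 ≤ lmin A := by
  rw [lmin, dif_pos hA.1]
  exact Real.iInf_nonneg hA.eigenvalues_nonneg

theorem lmin_pos [Nonempty (Fin n)] {A : Matrix (Fin n) (Fin n) ℝ} (hA : A.PosDef) :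
    0 < lmin A := by
  obtain ⟨i, hi⟩ := exists_eq_ciInf_of_finite (f := hA.1.eigenvalues)
  rw [lmin, dif_pos hA.1, ← hi]
  exact hA.eigenvalues_pos i

theorem norm_le_lmax_of_loewner {P Pmax : Matrix (Fin n) (Fin n) ℝ} (hP : P.PosSemidef)
    (h : Loewner P Pmax) : ‖P‖ ≤ lmax Pmax := by
  have hPmax : Pmax.PosSemidef := by simpa using PosSemidef.add h hP
  have hle : P ≤ algebraMap ℝ _ (lmax Pmax) := (show P ≤ Pmax from h).trans
    ((le_algebraMap_iff_spectrum_le hPmax.1.isSelfAdjoint).2 fun x hx =>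
      le_lmax_of_mem_spectrum hPmax.1 hx)
  rw [← cfc_id' ℝ P]
  refine norm_cfc_le (lmax_nonneg hPmax) fun x hx => ?_
  rw [norm_eq_abs, abs_of_nonneg (spectrum_nonneg_of_nonneg hP.nonneg hx)]
  exact (le_algebraMap_iff_spectrum_le hP.1.isSelfAdjoint).1 hle x hx

end FinDim

theorem stmt18_general {n : ℕ} (P Pb Qmin Pmax : Matrix (Fin n) (Fin n) ℝ)
    (hP : P.PosDef) (hPb : Pb.PosDef) (hQmin : Qmin.PosDef)
    (hPub : Loewner P Pmax)
    (γ : ℝ) (hγ : γ ∈ Set.Ioo (0 : ℝ) 1) (k : ℕ)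
    (hd : deltaInf P Pb ≤ γ ^ k * Real.log (lmax Pmax / lmin Qmin)) :
    ‖P - Pb‖ ≤ γ ^ k * (lmax Pmax) ^ 2 / lmin Qmin := by
  have hγk : 0 ≤ γ ^ k := pow_nonneg hγ.1.le k
  rcases isEmpty_or_nonempty (Fin n) with hn | hn
  · rw [Subsingleton.elim (P - Pb) 0, norm_zero]
    have := lmin_nonneg hQmin.posSemidef
    positivity
  set c := log (lmax Pmax / lmin Qmin)
  have hlmin := lmin_pos hQmin
  have hPnorm := norm_le_lmax_of_loewner hP.posSemidef hPub
  have hlmax : 0 < lmax Pmax := (norm_pos_iff.2 hP.ne_zero).trans_le hPnorm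
  calc ‖P - Pb‖ ≤ ‖P‖ * (exp (deltaInf P Pb) - 1) :=
        norm_sub_le_norm_mul_exp_deltaInf_sub_one hP hPb
    _ ≤ lmax Pmax * (exp (γ ^ k * c) - 1) :=
        mul_le_mul hPnorm (sub_le_sub_right (exp_le_exp.2 hd) 1)
          (sub_nonneg.2 (one_le_exp (norm_nonneg _))) hlmax.le
    _ ≤ lmax Pmax * (γ ^ k * (exp c - 1)) := by
        gcongr
        exact exp_mul_sub_one_le_mul hγk (pow_le_one₀ hγ.1.le hγ.2.le) c
    _ = γ ^ k * lmax Pmax ^ 2 / lmin Qmin - γ ^ k * lmax Pmax := by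
        rw [exp_log (div_pos hlmax hlmin)]
        field_simp
    _ ≤ γ ^ k * lmax Pmax ^ 2 / lmin Qmin := sub_le_self _ (by positivity)

theorem stmt18 {n : ℕ} (P Pb Qmin Pmax : Matrix (Fin n) (Fin n) ℝ)
    (hP : P.PosDef) (hPb : Pb.PosDef) (hQmin : Qmin.PosDef) (hPmax : Pmax.PosDef)
    (hPlb : Loewner Qmin P) (hPub : Loewner P Pmax)
    (hPblb : Loewner Qmin Pb) (hPbub : Loewner Pb Pmax)
    (γ : ℝ) (hγ : γ ∈ Set.Ioo (0 : ℝ) 1) (k : ℕ)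
    (hd : deltaInf P Pb ≤ γ ^ k * Real.log (lmax Pmax / lmin Qmin)) :
    ‖P - Pb‖ ≤ γ ^ k * (lmax Pmax) ^ 2 / lmin Qmin :=
  stmt18_general P Pb Qmin Pmax hP hPb hQmin hPub γ hγ k hd
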